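/- Let u be a positive solution of the radial problem (30). Assume f(r,0)=0 and f_r(r,u) \le 0 for all r \in [0,1] and u > 0, and that u\, f_u(r,u) - (p-1) f(r,u) > 0 for all r \in [0,1] and u > 0. Then the function r \mapsto f(r,u(r)) changes sign at most once on (0,1): there exists r_2 \in (0,1] such that f(r,u(r)) > 0 for all r \in [0,r_2), and if r_2 < 1 then f(r,u(r)) < 0 for all r \in (r_2,1). -/

import Mathlib

/-!
Along a solution the energy `E(r) = (1 - 1/p) |u'(r)|^p + F(r, u(r))`, with `F` the primitive of
`f` in `u`, is nonincreasing (because `f_r ≤ 0` and `n ≥ 1`), and `E(1) ≥ 0`. At a critical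
point `ξ ∈ [0,1)` of `u` this gives `F(ξ, u(ξ)) ≥ 0`; since `f(ξ, v) / v^(p-1)` is increasing,
`f(ξ, ·)` changes sign at most once, from negative to positive, so `f(ξ, u(ξ)) > 0`.

In particular `f(0, u(0)) > 0`. Let `r₀` be the first zero of `f(r, u(r))`. The flux
`r^(n-1) φ_p(u')` decreases on `[0, r₀]`, so `u'(r₀) < 0`. A first critical point `ξ > r₀` would
satisfy `u(ξ) < u(r₀)`, hence `f(ξ, u(ξ)) ≤ f(r₀, u(ξ)) < 0`, which is impossible. So `u`
decreases on `[r₀, 1]`, and the same comparison gives `f(r, u(r)) < 0` for `r > r₀`.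
-/

open Set

/-- `φ_p(t) = t |t|^{p-2}` (real exponent), with `φ_p(0)=0`. -/
noncomputable def phi (p t : ℝ) : ℝ := t * |t| ^ (p - 2)

/-- `φ_p'(t) = (p-1) |t|^{p-2}`. -/
noncomputable def phi' (p t : ℝ) : ℝ := (p - 1) * |t| ^ (p - 2)

/-- The derivative of a function on `[0,1]` (one-sided at the endpoints). -/
noncomputable def du (u : ℝ → ℝ) : ℝ → ℝ := derivWithin u (Set.Icc 0 1)

/-- A positive (classical) solution of the radial problem (30):
`(φ_p(u'))' + ((n-1)/r) φ_p(u') + f(r,u) = 0` on `(0,1)`, `u'(0) = u(1) = 0`,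
with `u ∈ C^1[0,1]`, `φ_p ∘ u' ∈ C^1((0,1])`, and `u > 0` on `[0,1)`. -/
structure RadialSol (p : ℝ) (n : ℕ) (f : ℝ → ℝ → ℝ) (u : ℝ → ℝ) : Prop where
  reg : ContDiffOn ℝ 1 u (Set.Icc 0 1)
  reg' : ContDiffOn ℝ 1 (fun r => phi p (du u r)) (Set.Ioc 0 1)
  pos : ∀ r ∈ Set.Ico (0:ℝ) 1, 0 < u r
  bc0 : du u 0 = 0
  bc1 : u 1 = 0
  ode : ∀ r ∈ Set.Ioo (0:ℝ) 1,
    deriv (fun s => phi p (du u s)) r + ((n : ℝ) - 1) / r * phi p (du u r) + f r (u r) = 0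

/-- A solution of the linearized problem (31) at `u`:
`(φ_p'(u') w')' + ((n-1)/r) φ_p'(u') w' + f_u(r,u) w = 0` on `(0,1)`, `w'(0) = w(1) = 0`. -/
structure LinSol (p : ℝ) (n : ℕ) (f : ℝ → ℝ → ℝ) (u w : ℝ → ℝ) : Prop where
  reg : ContDiffOn ℝ 1 w (Set.Icc 0 1)
  reg' : ContDiffOn ℝ 1 (fun r => phi' p (du u r) * du w r) (Set.Ioc 0 1)
  ode : ∀ r ∈ Set.Ioo (0:ℝ) 1,
    deriv (fun s => phi' p (du u s) * du w s) r
      + ((n : ℝ) - 1) / r * (phi' p (du u r) * du w r) + deriv (f r) (u r) * w r = 0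
  bc0 : du w 0 = 0
  bc1 : w 1 = 0

open Filter Topology

section Phi

variable {p : ℝ}

lemma abs_phi (hp : 1 < p) (t : ℝ) : |phi p t| = |t| ^ (p - 1) := by
  rw [phi, abs_mul, Real.abs_rpow_of_nonneg (abs_nonneg t), abs_abs,
    ← Real.rpow_one_add' (abs_nonneg t) (by linarith)]
  ring_nf

lemma phi_mul_self (hp : p ≠ 0) (t : ℝ) : t * phi p t = |t| ^ p := by
  rcases eq_or_ne t 0 with rfl | ht
  · simp [phi, Real.zero_rpow hp]
  · rw [phi, ← mul_assoc, ← sq, ← sq_abs, ← Real.rpow_natCast,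
      ← Real.rpow_add (abs_pos.2 ht)]
    norm_num

lemma phi_nonneg {t : ℝ} (ht : 0 ≤ t) : 0 ≤ phi p t := by
  unfold phi; positivity

lemma continuous_phi (hp : 1 < p) : Continuous (phi p) := by
  rw [continuous_iff_continuousAt]
  intro t
  rcases eq_or_ne t 0 with rfl | ht
  · rw [ContinuousAt, show phi p 0 = 0 by simp [phi]]
    apply squeeze_zero_norm (fun x => (abs_phi hp x).le)
    have : ContinuousAt (fun x : ℝ => |x| ^ (p - 1)) 0 :=
      (Real.continuousAt_rpow_const _ _ (by right; linarith)).comp continuous_abs.continuousAt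
    simpa [Real.zero_rpow (by linarith : p - 1 ≠ 0)] using this.tendsto
  · exact continuousAt_id.mul
      ((Real.continuousAt_rpow_const _ _ (Or.inl (abs_ne_zero.2 ht))).comp
        continuous_abs.continuousAt)

lemma phi_conj_phi (hp : 1 < p) (t : ℝ) : phi (p / (p - 1)) (phi p t) = t := by
  rcases eq_or_ne t 0 with rfl | ht
  · simp [phi]
  · have hp1 : p - 1 ≠ 0 := by linarith
    rw [phi, abs_phi hp, phi, ← Real.rpow_mul (abs_nonneg t), mul_assoc,
      ← Real.rpow_add (abs_pos.2 ht), show p - 2 + (p - 1) * (p / (p - 1) - 2) = 0 by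
        field_simp; ring, Real.rpow_zero, mul_one]

lemma hasDerivAt_abs_rpow_div (hp : 1 < p) (y : ℝ) :
    HasDerivAt (fun y : ℝ => |y| ^ p / p) (phi p y) y := by
  refine ((hasDerivAt_abs_rpow y hp).div_const p).congr_deriv ?_
  rw [phi]
  field_simp

end Phi

section Superhomogeneous

variable {g g' : ℝ → ℝ} {q : ℝ}

lemma strictMonoOn_mul_rpow_neg (hg : ∀ v > 0, HasDerivAt g (g' v) v)
    (h : ∀ v > 0, q * g v < v * g' v) :
    StrictMonoOn (fun v => g v * v ^ (-q)) (Ioi 0) := by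
  have hderiv : ∀ v > 0, HasDerivAt (fun v => g v * v ^ (-q))
      (v ^ (-q - 1) * (v * g' v - q * g v)) v := by
    intro v hv
    refine ((hg v hv).mul (Real.hasDerivAt_rpow_const (p := -q) (Or.inl hv.ne'))).congr_deriv ?_
    rw [show v ^ (-q) = v ^ (-q - 1) * v by
      rw [← Real.rpow_add_one hv.ne']; ring_nf]
    ring
  refine strictMonoOn_of_deriv_pos (convex_Ioi 0)
    (fun v hv => (hderiv v hv).continuousAt.continuousWithinAt) fun v hv => ?_
  rw [interior_Ioi] at hv
  rw [(hderiv v hv).deriv]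
  exact mul_pos (Real.rpow_pos_of_pos hv _) (sub_pos.2 (h v hv))

lemma neg_of_lt_of_nonpos (hg : StrictMonoOn (fun v => g v * v ^ (-q)) (Ioi 0))
    {v₁ v₂ : ℝ} (h₁ : 0 < v₁) (h₁₂ : v₁ < v₂) (h₂ : g v₂ ≤ 0) : g v₁ < 0 := by
  have hlt := hg h₁ (h₁.trans h₁₂) h₁₂
  have : g v₂ * v₂ ^ (-q) ≤ 0 :=
    mul_nonpos_of_nonpos_of_nonneg h₂ (Real.rpow_nonneg (h₁.trans h₁₂).le _)
  have : 0 < v₁ ^ (-q) := Real.rpow_pos_of_pos h₁ _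
  nlinarith

end Superhomogeneous

section Slice

variable {f : ℝ → ℝ → ℝ}

lemma continuousOn_slice (hf : ContinuousOn (fun z : ℝ × ℝ => f z.1 z.2) (Icc 0 1 ×ˢ Ici 0))
    {r : ℝ} (hr : r ∈ Icc (0:ℝ) 1) : ContinuousOn (f r) (Ici 0) :=
  hf.comp (continuousOn_const.prodMk continuousOn_id) fun _ ht => ⟨hr, ht⟩

lemma hasDerivAt_slice (hf : DifferentiableOn ℝ (fun z : ℝ × ℝ => f z.1 z.2) (Icc 0 1 ×ˢ Ici 0))
    {r v : ℝ} (hr : r ∈ Icc (0:ℝ) 1) (hv : 0 < v) :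
    HasDerivAt (f r) (deriv (f r) v) v := by
  have hmaps : MapsTo (fun t : ℝ => (r, t)) (Ici 0) (Icc 0 1 ×ˢ Ici 0) := fun _ ht => ⟨hr, ht⟩
  have h := (hf (r, v) ⟨hr, hv.le⟩).comp v
    ((differentiableAt_const r).prodMk differentiableAt_id).differentiableWithinAt hmaps
  exact (h.differentiableAt (Ici_mem_nhds hv)).hasDerivAt

lemma antitoneOn_slice (hf : DifferentiableOn ℝ (fun z : ℝ × ℝ => f z.1 z.2) (Icc 0 1 ×ˢ Ici 0))
    (hf0 : ∀ r ∈ Icc (0:ℝ) 1, f r 0 = 0)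
    (hfr : ∀ r ∈ Icc (0:ℝ) 1, ∀ v > (0:ℝ), deriv (fun s => f s v) r ≤ 0)
    {v : ℝ} (hv : 0 ≤ v) : AntitoneOn (fun r => f r v) (Icc 0 1) := by
  rcases hv.eq_or_lt with rfl | hv
  · intro a ha b hb _
    simp only [hf0 a ha, hf0 b hb, le_refl]
  have hdiff : DifferentiableOn ℝ (fun r => f r v) (Icc 0 1) :=
    hf.comp (differentiableOn_id.prodMk (differentiableOn_const v)) fun _ hr => ⟨hr, hv.le⟩
  refine antitoneOn_of_deriv_nonpos (convex_Icc 0 1) hdiff.continuousOn ?_ ?_ <;>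
    rw [interior_Icc]
  · exact hdiff.mono Ioo_subset_Icc_self
  · exact fun r hr => hfr r (Ioo_subset_Icc_self hr) v hv

end Slice

noncomputable def potential (f : ℝ → ℝ → ℝ) (r v : ℝ) : ℝ := ∫ t in (0:ℝ)..v, f r t

section Potential

variable {f : ℝ → ℝ → ℝ}

lemma continuousOn_potential
    (hf : ContinuousOn (fun z : ℝ × ℝ => f z.1 z.2) (Icc 0 1 ×ˢ Ici 0)) :
    ContinuousOn (fun z : ℝ × ℝ => potential f z.1 z.2) (Icc 0 1 ×ˢ Ici 0) := by
  -- extend `f` continuously to the whole plane, then integrate with a continuous parameter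
  set g : ℝ → ℝ → ℝ := fun r t => f (projIcc 0 1 zero_le_one r) (max t 0)
  have hg : Continuous (Function.uncurry g) :=
    hf.comp_continuous (f := fun z : ℝ × ℝ => ((projIcc 0 1 zero_le_one z.1 : ℝ), max z.2 0))
      (by fun_prop) fun z => ⟨(projIcc 0 1 zero_le_one z.1).2, le_max_right z.2 0⟩
  refine (intervalIntegral.continuous_parametric_primitive_of_continuous
    (μ := MeasureTheory.volume) (a₀ := 0) hg).continuousOn.congr ?_
  rintro ⟨r, v⟩ ⟨hr, hv⟩
  refine intervalIntegral.integral_congr fun t ht => ?_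
  rw [uIcc_of_le hv] at ht
  simp [g, projIcc_of_mem _ hr, max_eq_left ht.1]

lemma hasDerivAt_potential {r v : ℝ} (hf : ContinuousOn (f r) (Ici 0)) (hv : 0 < v) :
    HasDerivAt (potential f r) (f r v) v :=
  intervalIntegral.integral_hasDerivAt_right
    ((hf.mono fun _ ht => (uIcc_of_le hv.le ▸ ht).1).intervalIntegrable)
    ((hf.mono Ioi_subset_Ici_self).stronglyMeasurableAtFilter isOpen_Ioi v hv)
    ((hf v hv.le).continuousAt (Ici_mem_nhds hv))

lemma potential_neg {r v : ℝ} (hf : ContinuousOn (f r) (Icc 0 v)) (hv : 0 < v)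
    (hneg : ∀ t ∈ Ioo 0 v, f r t < 0) : potential f r v < 0 := by
  have := intervalIntegral.intervalIntegral_pos_of_pos_on
    (hf.neg.intervalIntegrable_of_Icc hv.le) (fun t ht => neg_pos.2 (hneg t ht)) hv
  rw [Pi.neg_def, intervalIntegral.integral_neg] at this
  exact neg_pos.1 this

lemma potential_le_of_le (hf : ContinuousOn (fun z : ℝ × ℝ => f z.1 z.2) (Icc 0 1 ×ˢ Ici 0))
    (hanti : ∀ v ≥ 0, AntitoneOn (fun r => f r v) (Icc 0 1))
    {r₁ r₂ v : ℝ} (h₁ : r₁ ∈ Icc (0:ℝ) 1) (h₂ : r₂ ∈ Icc (0:ℝ) 1) (h : r₁ ≤ r₂) (hv : 0 ≤ v) :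
    potential f r₂ v ≤ potential f r₁ v :=
  intervalIntegral.integral_mono_on hv
    (((continuousOn_slice hf h₂).mono Icc_subset_Ici_self).intervalIntegrable_of_Icc hv)
    (((continuousOn_slice hf h₁).mono Icc_subset_Ici_self).intervalIntegrable_of_Icc hv)
    fun t ht => hanti t ht.1 h₁ h₂ h

end Potential

lemma neg_of_le_of_lt_of_nonpos {f : ℝ → ℝ → ℝ} {q : ℝ}
    (hanti : ∀ v ≥ 0, AntitoneOn (fun r => f r v) (Icc 0 1))
    (hratio : ∀ r ∈ Icc (0:ℝ) 1, StrictMonoOn (fun v => f r v * v ^ (-q)) (Ioi 0))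
    {r₀ r v₀ v : ℝ} (hr₀ : r₀ ∈ Icc (0:ℝ) 1) (hr : r ∈ Icc r₀ 1) (h₀ : f r₀ v₀ ≤ 0)
    (hv : 0 < v) (hvv₀ : v < v₀) : f r v < 0 :=
  (hanti v hv.le hr₀ ⟨hr₀.1.trans hr.1, hr.2⟩ hr.1).trans_lt
    (neg_of_lt_of_nonpos (hratio r₀ hr₀) hv hvv₀ h₀)

lemma exists_first_zero {g : ℝ → ℝ} {a b : ℝ} (hab : a ≤ b) (hg : ContinuousOn g (Icc a b))
    (ha : g a < 0) (hb : 0 ≤ g b) : ∃ c ∈ Ioc a b, g c = 0 ∧ ∀ x ∈ Ico a c, g x < 0 := by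
  set Z := Icc a b ∩ g ⁻¹' Ici 0
  have hbdd : BddBelow Z := ⟨a, fun x hx => hx.1.1⟩
  have hcZ : sInf Z ∈ Z := (hg.preimage_isClosed_of_isClosed isClosed_Icc isClosed_Ici).csInf_mem
    ⟨b, right_mem_Icc.2 hab, hb⟩ hbdd
  set c := sInf Z
  have hbefore : ∀ x ∈ Ico a c, g x < 0 := fun x hx => by
    by_contra! h
    exact (csInf_le hbdd ⟨⟨hx.1, hx.2.le.trans hcZ.1.2⟩, h⟩).not_gt hx.2
  have hac : a < c := hcZ.1.1.lt_of_ne fun h => (h ▸ ha).not_ge hcZ.2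
  obtain ⟨x, hx, hgx⟩ := intermediate_value_Icc hac.le (hg.mono (Icc_subset_Icc le_rfl hcZ.1.2))
    ⟨ha.le, hcZ.2⟩
  have hxc : x = c := hx.2.eq_or_lt.resolve_right fun h => (hbefore x ⟨hx.1, h⟩).ne hgx
  exact ⟨c, ⟨hac, hcZ.1.2⟩, hxc ▸ hgx, hbefore⟩

noncomputable def energy (p : ℝ) (f : ℝ → ℝ → ℝ) (u : ℝ → ℝ) (r : ℝ) : ℝ :=
  (p - 1) / p * |du u r| ^ p + potential f r (u r)

namespace RadialSol

variable {p : ℝ} {n : ℕ} {f : ℝ → ℝ → ℝ} {u : ℝ → ℝ}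

lemma continuousOn_du (hu : RadialSol p n f u) : ContinuousOn (du u) (Icc 0 1) :=
  hu.reg.continuousOn_derivWithin (uniqueDiffOn_Icc one_pos) le_rfl

lemma nonneg (hu : RadialSol p n f u) {r : ℝ} (hr : r ∈ Icc (0:ℝ) 1) : 0 ≤ u r := by
  rcases hr.2.eq_or_lt with rfl | h
  · exact hu.bc1.ge
  · exact (hu.pos r ⟨hr.1, h⟩).le

lemma continuousOn_apply (hf : ContinuousOn (fun z : ℝ × ℝ => f z.1 z.2) (Icc 0 1 ×ˢ Ici 0))
    (hu : RadialSol p n f u) : ContinuousOn (fun r => f r (u r)) (Icc 0 1) :=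
  hf.comp (continuousOn_id.prodMk hu.reg.continuousOn) fun _ hr => ⟨hr, hu.nonneg hr⟩

lemma hasDerivAt (hu : RadialSol p n f u) {r : ℝ} (hr : r ∈ Ioo (0:ℝ) 1) :
    HasDerivAt u (du u r) r := by
  have hnhds : Icc (0:ℝ) 1 ∈ 𝓝 r := Icc_mem_nhds hr.1 hr.2
  rw [du, derivWithin_of_mem_nhds hnhds]
  exact ((hu.reg.differentiableOn one_ne_zero r (Ioo_subset_Icc_self hr)).differentiableAt
    hnhds).hasDerivAt

lemma strictAntiOn (hu : RadialSol p n f u) {a b : ℝ} (ha : 0 ≤ a) (hb : b ≤ 1)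
    (h : ∀ t ∈ Ioo a b, du u t < 0) : StrictAntiOn u (Icc a b) :=
  strictAntiOn_of_deriv_neg (convex_Icc a b) (hu.reg.continuousOn.mono (Icc_subset_Icc ha hb))
    fun t ht => by
      rw [interior_Icc] at ht
      rw [(hu.hasDerivAt ⟨ha.trans_lt ht.1, ht.2.trans_le hb⟩).deriv]
      exact h t ht

lemma hasDerivAt_phi_du (hu : RadialSol p n f u) {r : ℝ} (hr : r ∈ Ioo (0:ℝ) 1) :
    HasDerivAt (fun s => phi p (du u s)) (-(((n:ℝ) - 1) / r * phi p (du u r)) - f r (u r)) r := by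
  have hnhds : Ioc (0:ℝ) 1 ∈ 𝓝 r := Ioc_mem_nhds hr.1 hr.2
  refine ((hu.reg'.differentiableOn one_ne_zero r (Ioo_subset_Ioc_self hr)).differentiableAt
    hnhds).hasDerivAt.congr_deriv ?_
  linarith [hu.ode r hr]

lemma hasDerivAt_flux (hn : 1 ≤ n) (hu : RadialSol p n f u) {r : ℝ} (hr : r ∈ Ioo (0:ℝ) 1) :
    HasDerivAt (fun t => t ^ (n - 1) * phi p (du u t)) (-(r ^ (n - 1) * f r (u r))) r := by
  obtain ⟨m, rfl⟩ : ∃ m, n = m + 1 := ⟨n - 1, by omega⟩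
  refine ((hasDerivAt_pow (m + 1 - 1) r).mul (hu.hasDerivAt_phi_du hr)).congr_deriv ?_
  have hr0 : r ≠ 0 := hr.1.ne'
  rcases m with _ | m
  · simp
  · simp only [Nat.add_sub_cancel]
    push_cast
    field_simp
    ring

lemma du_neg_of_forall_pos (hp : 1 < p) (hn : 1 ≤ n) (hu : RadialSol p n f u) {r₀ : ℝ}
    (hr₀ : r₀ ∈ Ioo (0:ℝ) 1) (hpos : ∀ r ∈ Ioo 0 r₀, 0 < f r (u r)) : du u r₀ < 0 := by
  have hanti : StrictAntiOn (fun t => t ^ (n - 1) * phi p (du u t)) (Icc 0 r₀) := by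
    refine strictAntiOn_of_deriv_neg (convex_Icc 0 r₀) ?_ fun r hr => ?_
    · exact ((continuousOn_pow _).mul ((continuous_phi hp).comp_continuousOn
        hu.continuousOn_du)).mono (Icc_subset_Icc le_rfl hr₀.2.le)
    · rw [interior_Icc] at hr
      rw [(hu.hasDerivAt_flux hn ⟨hr.1, hr.2.trans hr₀.2⟩).deriv, neg_lt_zero]
      exact mul_pos (pow_pos hr.1 _) (hpos r hr)
  have hlt := hanti (left_mem_Icc.2 hr₀.1.le) (right_mem_Icc.2 hr₀.1.le) hr₀.1
  simp only [hu.bc0, phi, zero_mul, mul_zero] at hlt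
  by_contra! hdu
  exact hlt.not_ge (mul_nonneg (pow_nonneg hr₀.1.le _) (phi_nonneg hdu))

lemma continuousOn_energy (hp : 0 ≤ p)
    (hf : ContinuousOn (fun z : ℝ × ℝ => f z.1 z.2) (Icc 0 1 ×ˢ Ici 0))
    (hu : RadialSol p n f u) : ContinuousOn (energy p f u) (Icc 0 1) :=
  (continuousOn_const.mul (hu.continuousOn_du.abs.rpow_const fun _ _ => Or.inr hp)).add
    ((continuousOn_potential hf).comp (continuousOn_id.prodMk hu.reg.continuousOn)
      fun _ hr => ⟨hr, hu.nonneg hr⟩)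

/-- Writing the kinetic term as `|φ_p(u')|^{p'} / p'` makes it differentiable although `u'`
need not be. -/
lemma hasDerivAt_kinetic (hp : 1 < p) (hu : RadialSol p n f u) {r : ℝ}
    (hr : r ∈ Ioo (0:ℝ) 1) :
    HasDerivAt (fun s => (p - 1) / p * |du u s| ^ p)
      (du u r * (-(((n:ℝ) - 1) / r * phi p (du u r)) - f r (u r))) r := by
  have hp1 : p - 1 ≠ 0 := by linarith
  have hq : 1 < p / (p - 1) := (one_lt_div (by linarith)).2 (by linarith)
  have h := (hasDerivAt_abs_rpow_div hq (phi p (du u r))).comp r (hu.hasDerivAt_phi_du hr)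
  rw [phi_conj_phi hp] at h
  refine h.congr_of_eventuallyEq (Eventually.of_forall fun s => ?_)
  simp only [Function.comp, abs_phi hp, ← Real.rpow_mul (abs_nonneg _),
    show (p - 1) * (p / (p - 1)) = p by field_simp]
  field_simp

/-- Freezing the potential at `r` gives a function that is differentiable at `r` and, since `F`
decreases in `r`, dominates `energy` to the right of `r`. -/
lemma hasDerivAt_energy_frozen (hp : 1 < p)
    (hf : ContinuousOn (fun z : ℝ × ℝ => f z.1 z.2) (Icc 0 1 ×ˢ Ici 0))
    (hu : RadialSol p n f u) {r : ℝ} (hr : r ∈ Ioo (0:ℝ) 1) :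
    HasDerivAt (fun s => (p - 1) / p * |du u s| ^ p + potential f r (u s))
      (-(((n:ℝ) - 1) / r * |du u r| ^ p)) r := by
  refine ((hu.hasDerivAt_kinetic hp hr).add
    ((hasDerivAt_potential (continuousOn_slice hf (Ioo_subset_Icc_self hr))
      (hu.pos r ⟨hr.1.le, hr.2⟩)).comp r (hu.hasDerivAt hr))).congr_deriv ?_
  rw [← phi_mul_self (by linarith)]
  ring

lemma eventually_slope_energy_lt (hp : 1 < p) (hn : 1 ≤ n)
    (hf : ContinuousOn (fun z : ℝ × ℝ => f z.1 z.2) (Icc 0 1 ×ˢ Ici 0))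
    (hanti : ∀ v ≥ 0, AntitoneOn (fun r => f r v) (Icc 0 1))
    (hu : RadialSol p n f u) {r ε : ℝ} (hr : r ∈ Ioo (0:ℝ) 1) (hε : 0 < ε) :
    ∀ᶠ s in 𝓝[>] r, slope (energy p f u) r s < ε := by
  have hd := hu.hasDerivAt_energy_frozen hp hf hr
  have hd_nonpos : -(((n:ℝ) - 1) / r * |du u r| ^ p) ≤ 0 := by
    have hn' : (0:ℝ) ≤ n - 1 := by
      have : (1:ℝ) ≤ n := by exact_mod_cast hn
      linarith
    exact neg_nonpos.2 (mul_nonneg (div_nonneg hn' hr.1.le) (by positivity))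
  have hslope : ∀ᶠ s in 𝓝[>] r,
      slope (fun s => (p - 1) / p * |du u s| ^ p + potential f r (u s)) r s < ε :=
    ((hasDerivAt_iff_tendsto_slope.1 hd).mono_left (nhdsWithin_mono _ fun _ hs => ne_of_gt hs))
      (gt_mem_nhds (hd_nonpos.trans_lt hε))
  filter_upwards [hslope, Ioo_mem_nhdsGT hr.2] with s hs hrs
  refine lt_of_le_of_lt ?_ hs
  have hs01 : s ∈ Icc (0:ℝ) 1 := ⟨hr.1.le.trans hrs.1.le, hrs.2.le⟩
  have := potential_le_of_le hf hanti (Ioo_subset_Icc_self hr) hs01 hrs.1.le (hu.nonneg hs01)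
  rw [slope_def_field, slope_def_field]
  unfold energy
  gcongr
  exact sub_nonneg.2 hrs.1.le

lemma energy_le_of_le (hp : 1 < p) (hn : 1 ≤ n)
    (hf : ContinuousOn (fun z : ℝ × ℝ => f z.1 z.2) (Icc 0 1 ×ˢ Ici 0))
    (hanti : ∀ v ≥ 0, AntitoneOn (fun r => f r v) (Icc 0 1))
    (hu : RadialSol p n f u) {a b : ℝ} (ha : 0 < a) (hab : a ≤ b) (hb : b ≤ 1) :
    energy p f u b ≤ energy p f u a :=
  image_le_of_liminf_slope_right_le_deriv_boundary (B := fun _ => energy p f u a) (B' := 0)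
    ((hu.continuousOn_energy (by linarith) hf).mono (Icc_subset_Icc ha.le hb)) le_rfl
    continuousOn_const (fun _ _ => hasDerivWithinAt_const _ _ _)
    (fun x hx _ hε => (hu.eventually_slope_energy_lt hp hn hf hanti
      ⟨ha.trans_le hx.1, hx.2.trans_le hb⟩ hε).frequently)
    (right_mem_Icc.2 hab)

lemma energy_nonneg (hp : 1 < p) (hn : 1 ≤ n)
    (hf : ContinuousOn (fun z : ℝ × ℝ => f z.1 z.2) (Icc 0 1 ×ˢ Ici 0))
    (hanti : ∀ v ≥ 0, AntitoneOn (fun r => f r v) (Icc 0 1))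
    (hu : RadialSol p n f u) {r : ℝ} (hr : r ∈ Icc (0:ℝ) 1) : 0 ≤ energy p f u r := by
  have h1 : 0 ≤ energy p f u 1 := by
    rw [energy, hu.bc1, potential, intervalIntegral.integral_same, add_zero]
    exact mul_nonneg (div_nonneg (by linarith) (by linarith)) (by positivity)
  have hsub : Ioc 0 1 ⊆ Icc 0 1 ∩ energy p f u ⁻¹' Ici 0 := fun s hs =>
    ⟨Ioc_subset_Icc_self hs, h1.trans (hu.energy_le_of_le hp hn hf hanti hs.1 hs.2 le_rfl)⟩
  have hclosed : IsClosed (Icc 0 1 ∩ energy p f u ⁻¹' Ici 0) :=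
    (hu.continuousOn_energy (by linarith) hf).preimage_isClosed_of_isClosed isClosed_Icc
      isClosed_Ici
  rw [← closure_Ioc zero_ne_one] at hr
  exact (closure_minimal hsub hclosed hr).2

lemma apply_pos_of_du_eq_zero (hp : 1 < p) (hn : 1 ≤ n)
    (hf : ContinuousOn (fun z : ℝ × ℝ => f z.1 z.2) (Icc 0 1 ×ˢ Ici 0))
    (hanti : ∀ v ≥ 0, AntitoneOn (fun r => f r v) (Icc 0 1))
    (hratio : ∀ r ∈ Icc (0:ℝ) 1, StrictMonoOn (fun v => f r v * v ^ (-(p - 1))) (Ioi 0))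
    (hu : RadialSol p n f u) {r : ℝ} (hr : r ∈ Ico (0:ℝ) 1) (hdu : du u r = 0) :
    0 < f r (u r) := by
  by_contra! hle
  have hr' : r ∈ Icc (0:ℝ) 1 := Ico_subset_Icc_self hr
  have hneg : potential f r (u r) < 0 :=
    potential_neg ((continuousOn_slice hf hr').mono Icc_subset_Ici_self) (hu.pos r hr)
      fun t ht => neg_of_lt_of_nonpos (hratio r hr') ht.1 ht.2 hle
  have hE := hu.energy_nonneg hp hn hf hanti hr'
  rw [energy, hdu, abs_zero, Real.zero_rpow (by linarith), mul_zero, zero_add] at hE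
  linarith

lemma du_neg_of_apply_nonpos (hp : 1 < p) (hn : 1 ≤ n)
    (hf : ContinuousOn (fun z : ℝ × ℝ => f z.1 z.2) (Icc 0 1 ×ˢ Ici 0))
    (hanti : ∀ v ≥ 0, AntitoneOn (fun r => f r v) (Icc 0 1))
    (hratio : ∀ r ∈ Icc (0:ℝ) 1, StrictMonoOn (fun v => f r v * v ^ (-(p - 1))) (Ioi 0))
    (hu : RadialSol p n f u) {r₀ : ℝ} (hr₀ : r₀ ∈ Ioo (0:ℝ) 1) (hf₀ : f r₀ (u r₀) ≤ 0)
    (hdu : du u r₀ < 0) : ∀ t ∈ Ico r₀ 1, du u t < 0 := by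
  by_contra! ⟨t, ht, hdu_t⟩
  obtain ⟨ξ, hξ, hξ0, hbefore⟩ := exists_first_zero ht.1
    (hu.continuousOn_du.mono (Icc_subset_Icc hr₀.1.le ht.2.le)) hdu hdu_t
  have hξ1 : ξ < 1 := hξ.2.trans_lt ht.2
  have hu_lt : u ξ < u r₀ :=
    hu.strictAntiOn hr₀.1.le hξ1.le (fun s hs => hbefore s (Ioo_subset_Ico_self hs))
      (left_mem_Icc.2 hξ.1.le) (right_mem_Icc.2 hξ.1.le) hξ.1
  have hξ' : ξ ∈ Ico (0:ℝ) 1 := ⟨(hr₀.1.trans hξ.1).le, hξ1⟩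
  exact (hu.apply_pos_of_du_eq_zero hp hn hf hanti hratio hξ' hξ0).not_gt
    (neg_of_le_of_lt_of_nonpos hanti hratio (Ioo_subset_Icc_self hr₀) ⟨hξ.1.le, hξ1.le⟩ hf₀
      (hu.pos ξ hξ') hu_lt)

end RadialSol

/-- Lemma 2.3: `f(r,u(r))` changes sign at most once on `(0,1)`. -/
theorem stmt1 (p : ℝ) (hp : 1 < p) (n : ℕ) (hn : 1 ≤ n)
    (f : ℝ → ℝ → ℝ)
    (hf : ContDiffOn ℝ 1 (fun z : ℝ × ℝ => f z.1 z.2) (Set.Icc 0 1 ×ˢ Set.Ici 0))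
    (hf0 : ∀ r ∈ Set.Icc (0:ℝ) 1, f r 0 = 0)
    (hfr : ∀ r ∈ Set.Icc (0:ℝ) 1, ∀ v > (0:ℝ), deriv (fun s => f s v) r ≤ 0)
    (h22 : ∀ r ∈ Set.Icc (0:ℝ) 1, ∀ v > (0:ℝ),
      0 < v * deriv (f r) v - (p - 1) * f r v)
    (u : ℝ → ℝ) (hu : RadialSol p n f u) :
    ∃ r₂ ∈ Set.Ioc (0:ℝ) 1,
      (∀ r ∈ Set.Ico (0:ℝ) r₂, 0 < f r (u r)) ∧
      (r₂ < 1 → ∀ r ∈ Set.Ioo r₂ 1, f r (u r) < 0) := by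
  have hfc := hf.continuousOn
  have hanti : ∀ v ≥ 0, AntitoneOn (fun r => f r v) (Icc 0 1) := fun v hv =>
    antitoneOn_slice (hf.differentiableOn one_ne_zero) hf0 hfr hv
  have hratio : ∀ r ∈ Icc (0:ℝ) 1, StrictMonoOn (fun v => f r v * v ^ (-(p - 1))) (Ioi 0) :=
    fun r hr => strictMonoOn_mul_rpow_neg
      (fun v hv => hasDerivAt_slice (hf.differentiableOn one_ne_zero) hr hv)
      (fun v hv => by linarith [h22 r hr v hv])
  by_cases hall : ∀ r ∈ Ico (0:ℝ) 1, 0 < f r (u r)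
  · exact ⟨1, right_mem_Ioc.2 one_pos, hall, fun h => absurd h (lt_irrefl 1)⟩
  push Not at hall
  obtain ⟨r', hr', hr'f⟩ := hall
  have hpos₀ := hu.apply_pos_of_du_eq_zero hp hn hfc hanti hratio ⟨le_rfl, one_pos⟩ hu.bc0
  obtain ⟨r₀, hr₀, hr₀f, hbefore⟩ := exists_first_zero hr'.1
    ((hu.continuousOn_apply hfc).neg.mono (Icc_subset_Icc le_rfl hr'.2.le))
    (neg_neg_of_pos hpos₀) (neg_nonneg.2 hr'f)
  have hr₀' : r₀ ∈ Ioo (0:ℝ) 1 := ⟨hr₀.1, hr₀.2.trans_lt hr'.2⟩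
  have hf₀ : f r₀ (u r₀) ≤ 0 := (neg_eq_zero.1 hr₀f).le
  have hdu := hu.du_neg_of_forall_pos hp hn hr₀' fun r hr =>
    neg_neg_iff_pos.1 (hbefore r (Ioo_subset_Ico_self hr))
  have hdec := hu.strictAntiOn hr₀'.1.le le_rfl fun t ht =>
    hu.du_neg_of_apply_nonpos hp hn hfc hanti hratio hr₀' hf₀ hdu t
      (Ioo_subset_Ico_self ht)
  refine ⟨r₀, ⟨hr₀.1, hr₀'.2.le⟩, fun r hr => neg_neg_iff_pos.1 (hbefore r hr), fun _ r hr => ?_⟩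
  exact neg_of_le_of_lt_of_nonpos hanti hratio (Ioo_subset_Icc_self hr₀') ⟨hr.1.le, hr.2.le⟩
    hf₀ (hu.pos r ⟨hr₀.1.le.trans hr.1.le, hr.2⟩)
    (hdec (left_mem_Icc.2 hr₀'.2.le) ⟨hr.1.le, hr.2.le⟩ hr.1)
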